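/- arXiv:2005.07227 — 2 statements merged into one kernel-verified Lean document; each statement's English description precedes it below -/
import Mathlib

section
/- In a decreasing consumption MDP, every run must visit a reload state infinitely often or exhaust its resource: if ρ is a d-safe run for some d, and ρ visits reload states only finitely often, then this contradicts d-safety; formally, every d-safe run in a decreasing CMDP visits R infinitely many times. -/
open scoped Classical NNReal ENat

noncomputable section

/-- A consumption Markov decision process. -/
structure CMDP (S A : Type) [Fintype S] where
  Δ : S → A → S → NNReal
  Δ_sum : ∀ s a, (∑ t, Δ s a t) = 1
  C : S → A → ℕ
  R : Set S
  cap : ℕ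

namespace CMDP

variable {S A : Type} [Fintype S]

/-- Strategies map histories (initial state, list of action/state steps) to actions. -/
abbrev Strat (S A : Type) : Type := S × List (A × S) → A

/-- Last state of a history. -/
def lastState (s : S) : List (A × S) → S
  | [] => s
  | (_, t) :: rest => lastState t rest

/-- The `i`-th state (0-indexed) of a history. -/
def stateAt (s : S) (steps : List (A × S)) (i : ℕ) : S :=
  (s :: steps.map Prod.snd).getD i s

variable (M : CMDP S A)

def Succ (s : S) (a : A) : Set S := {t | 0 < M.Δ s a t}

/-- Total consumption along a finite path. -/
def consAux : S → List (A × S) → ℕ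
  | _, [] => 0
  | s, (a, t) :: rest => M.C s a + consAux t rest

/-- One step of the energy-level update. -/
def levelStep (s : S) (a : A) (l : ℕ) : Option ℕ :=
  if s ∈ M.R then (if M.C s a ≤ M.cap then some (M.cap - M.C s a) else none)
  else (if M.C s a ≤ l then some (l - M.C s a) else none)

def energyFrom : Option ℕ → S → List (A × S) → Option ℕ
  | none, _, _ => none
  | some l, _, [] => some l
  | some l, s, (a, t) :: rest => energyFrom (M.levelStep s a l) t rest

/-- Energy level of a history initialized by `d` (`none` = ⊥, exhaustion). -/
def energy (d : ℕ) (s : S) (steps : List (A × S)) : Option ℕ :=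
  M.energyFrom (some d) s steps

/-- Validity of a finite path. -/
def ValidPath : S → List (A × S) → Prop
  | _, [] => True
  | s, (a, t) :: rest => t ∈ M.Succ s a ∧ ValidPath t rest

/-- First state of a run. -/
def runState (ρ : ℕ → S × A) (i : ℕ) : S := (ρ i).1

/-- The finite prefix of a run with `i` steps. -/
def prefixSteps (ρ : ℕ → S × A) (i : ℕ) : List (A × S) :=
  (List.range i).map fun k => ((ρ k).2, (ρ (k + 1)).1)

def IsRun (ρ : ℕ → S × A) : Prop := ∀ i, (ρ (i + 1)).1 ∈ M.Succ (ρ i).1 (ρ i).2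

/-- A run is `d`-safe if the energy level of every finite prefix is defined. -/
def DSafe (d : ℕ) (ρ : ℕ → S × A) : Prop :=
  ∀ i, M.energy d (runState ρ 0) (prefixSteps ρ i) ≠ none

/-- A run is compatible with a strategy. -/
def Compat (σ : Strat S A) (ρ : ℕ → S × A) : Prop :=
  M.IsRun ρ ∧ ∀ i, (ρ i).2 = σ (runState ρ 0, prefixSteps ρ i)

def CompatFrom (σ : Strat S A) (s : S) (ρ : ℕ → S × A) : Prop :=
  M.Compat σ ρ ∧ runState ρ 0 = s

/-- A strategy is `d`-safe in `s` if all compatible runs from `s` are `d`-safe. -/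
def SafeStrat (σ : Strat S A) (d : ℕ) (s : S) : Prop :=
  ∀ ρ, M.CompatFrom σ s ρ → M.DSafe d ρ

/-- A finite history compatible with a strategy. -/
def CompatHist (σ : Strat S A) (s : S) (steps : List (A × S)) : Prop :=
  M.ValidPath s steps ∧
    ∀ (i : ℕ) (h : i < steps.length), (steps.get ⟨i, h⟩).1 = σ (s, steps.take i)

def Memoryless (σ : Strat S A) : Prop :=
  ∀ h₁ h₂ : S × List (A × S), lastState h₁.1 h₁.2 = lastState h₂.1 h₂.2 → σ h₁ = σ h₂

/-- Cost of a run up to the first visit of `T` (∞ if `T` is never visited). -/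
def reachCost (T : Set S) (ρ : ℕ → S × A) : ℕ∞ :=
  ⨅ i ∈ {i : ℕ | runState ρ i ∈ T}, (M.consAux (runState ρ 0) (prefixSteps ρ i) : ℕ∞)

/-- `i`-step bounded reachability cost. -/
def reachCostBdd (T : Set S) (n : ℕ) (ρ : ℕ → S × A) : ℕ∞ :=
  ⨅ i ∈ {i : ℕ | i ≤ n ∧ runState ρ i ∈ T}, (M.consAux (runState ρ 0) (prefixSteps ρ i) : ℕ∞)

/-- Reachability cost requiring at least one step. -/
def reachCostPlus (T : Set S) (ρ : ℕ → S × A) : ℕ∞ :=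
  ⨅ i ∈ {i : ℕ | 1 ≤ i ∧ runState ρ i ∈ T}, (M.consAux (runState ρ 0) (prefixSteps ρ i) : ℕ∞)

def reachCostStrat (T : Set S) (σ : Strat S A) (s : S) : ℕ∞ :=
  ⨆ ρ ∈ {ρ | M.CompatFrom σ s ρ}, M.reachCost T ρ

def minReach (T : Set S) (s : S) : ℕ∞ :=
  ⨅ σ : Strat S A, M.reachCostStrat T σ s

def minReachBdd (T : Set S) (n : ℕ) (s : S) : ℕ∞ :=
  ⨅ σ : Strat S A, ⨆ ρ ∈ {ρ | M.CompatFrom σ s ρ}, M.reachCostBdd T n ρ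

def minReachPlus (T : Set S) (s : S) : ℕ∞ :=
  ⨅ σ : Strat S A, ⨆ ρ ∈ {ρ | M.CompatFrom σ s ρ}, M.reachCostPlus T ρ

/-- The Bellman operator for minimum cost reachability of `T`. -/
def bellman (T : Set S) (v : S → ℕ∞) : S → ℕ∞ := fun s =>
  if s ∈ T then 0 else ⨅ a : A, ((M.C s a : ℕ∞) + ⨆ t ∈ M.Succ s a, v t)

/-- The initial vector: `0` on `T`, `∞` elsewhere. -/
def xTvec (T : Set S) : S → ℕ∞ := fun s => if s ∈ T then 0 else ⊤

/-- Length of the longest simple path of `M`. -/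
def longestSimple : ℕ :=
  sSup {n | ∃ (s : S) (steps : List (A × S)),
    M.ValidPath s steps ∧ (s :: steps.map Prod.snd).Nodup ∧ steps.length = n}

/-- The augmented CMDP `M̃` with a fresh non-reload copy of every state. -/
def augment : CMDP (S ⊕ S) A where
  Δ := fun x a t =>
    Sum.elim (fun u => M.Δ (Sum.elim id id x) a u) (fun _ => (0 : NNReal)) t
  Δ_sum := by
    intro x a
    rw [Fintype.sum_sum_type]
    simp [M.Δ_sum (Sum.elim id id x) a]
  C := fun x a => M.C (Sum.elim id id x) a
  R := Sum.inl '' M.R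
  cap := M.cap

/-- Truncation to `0` on reload states. -/
def strunc (x : S → ℕ∞) : S → ℕ∞ := fun s => if s ∈ M.R then 0 else x s

/-- The truncated Bellman-like operator `G`. -/
def opG (v : S → ℕ∞) : S → ℕ∞ := fun s =>
  ⨅ a : A, ((M.C s a : ℕ∞) + ⨆ t ∈ M.Succ s a, M.strunc v t)

/-- Minimal `d ≤ cap` such that some strategy is `d`-safe in `s` (∞ if none). -/
def safeVec (s : S) : ℕ∞ :=
  ⨅ d ∈ {d : ℕ | d ≤ M.cap ∧ ∃ σ : Strat S A, M.SafeStrat σ d s}, (d : ℕ∞)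

/-- An action safe in a state. -/
def SafeAction (s : S) (a : A) : Prop :=
  (s ∉ M.R ∧ ((M.C s a : ℕ∞) + ⨆ t ∈ M.Succ s a, M.safeVec t) ≤ M.safeVec s) ∨
  (s ∈ M.R ∧ ((M.C s a : ℕ∞) + ⨆ t ∈ M.Succ s a, M.safeVec t) ≤ (M.cap : ℕ∞))

/-- A CMDP is decreasing if every (valid) simple cycle has positive consumption. -/
def Decreasing : Prop :=
  ∀ (s : S) (steps : List (A × S)), M.ValidPath s steps → steps ≠ [] →
    lastState s steps = s → (s :: (steps.map Prod.snd).dropLast).Nodup →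
    0 < M.consAux s steps

/-- Selection according to a selection rule: the action of the largest
element of the domain below the counter value. -/
def selectFrom (φ : ℕ → Option A) (m : ℕ) (a₀ : A) : A :=
  (((List.range (m + 1)).reverse).findSome? φ).getD a₀

/-- The finite counter strategy `Σ^y` induced by a counter selector. -/
def counterStrategy (sel : S → ℕ → Option A) (y : S → ℕ) (a₀ : A) : Strat S A :=
  fun h =>
    match M.energy (y h.1) h.1 h.2 with
    | some m => selectFrom (sel (lastState h.1 h.2)) m a₀
    | none => a₀

/-- The `SPR` value of an action. -/
def spr (s : S) (a : A) (x : S → ℕ∞) : ℕ∞ :=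
  (M.C s a : ℕ∞) +
    ⨅ t ∈ M.Succ s a, max (x t) (⨆ t' ∈ {t' ∈ M.Succ s a | t' ≠ t}, M.safeVec t')

def opA (T : Set S) (x : S → ℕ∞) : S → ℕ∞ := fun s =>
  if s ∈ T then M.safeVec s else ⨅ a : A, M.spr s a x

/-- Two-sided truncation. -/
def trunc2 (x : S → ℕ∞) : S → ℕ∞ := fun s =>
  if (M.cap : ℕ∞) < x s then ⊤ else if s ∈ M.R then 0 else x s

def opB (T : Set S) (x : S → ℕ∞) : S → ℕ∞ := M.trunc2 (M.opA T x)

def yTvec (T : Set S) : S → ℕ∞ := fun s => if s ∈ T then M.safeVec s else ⊤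

def VisitsWithin (T : Set S) (i : ℕ) (ρ : ℕ → S × A) : Prop :=
  ∃ j ≤ i, runState ρ j ∈ T

def Visits (T : Set S) (ρ : ℕ → S × A) : Prop := ∃ j, runState ρ j ∈ T

/-- Minimal `ℓ ≤ cap` s.t. some `ℓ`-safe strategy from `s` has a run visiting `T`
within the first `i` steps. -/
def safePRBdd (T : Set S) (i : ℕ) (s : S) : ℕ∞ :=
  ⨅ ℓ ∈ {ℓ : ℕ | ℓ ≤ M.cap ∧ ∃ σ : Strat S A, M.SafeStrat σ ℓ s ∧
      ∃ ρ, M.CompatFrom σ s ρ ∧ VisitsWithin T i ρ}, (ℓ : ℕ∞)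

/-- Minimal `ℓ ≤ cap` s.t. some `ℓ`-safe strategy from `s` has a run visiting `T`. -/
def safePR (T : Set S) (s : S) : ℕ∞ :=
  ⨅ ℓ ∈ {ℓ : ℕ | ℓ ≤ M.cap ∧ ∃ σ : Strat S A, M.SafeStrat σ ℓ s ∧
      ∃ ρ, M.CompatFrom σ s ρ ∧ Visits T ρ}, (ℓ : ℕ∞)

/-- Replace the set of reload states. -/
def setReload (R' : Set S) : CMDP S A := { M with R := R' }

/-- Probability of a finite continuation of a history under a strategy. -/
def pathProbAux (σ : Strat S A) : S × List (A × S) → List (A × S) → NNReal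
  | _, [] => 1
  | h, (a, t) :: rest =>
      (if σ h = a then M.Δ (lastState h.1 h.2) a t else 0) *
        pathProbAux σ (h.1, h.2 ++ [(a, t)]) rest

/-- Probability that the length-`n` prefix of a run from `s` under `σ`
satisfies the predicate `P`. -/
def probEvent [Fintype A] (σ : Strat S A) (s : S) (n : ℕ) (P : List (A × S) → Prop) : NNReal :=
  ∑ f : Fin n → A × S,
    if P (List.ofFn f) then M.pathProbAux σ (s, []) (List.ofFn f) else 0

/-- Number of visits of `T` along a finite path. -/
def visitCount (T : Set S) (s : S) (steps : List (A × S)) : ℕ :=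
  (s :: steps.map Prod.snd).countP (fun x => decide (x ∈ T))

/-- `T` is visited infinitely often with probability one under `σ` from `s`. -/
def buchiAS [Fintype A] (σ : Strat S A) (s : S) (T : Set S) : Prop :=
  ∀ k : ℕ,
    (⨆ n : ℕ, M.probEvent σ s n (fun steps => k ≤ visitCount T s steps)) = 1

/-- Minimal `d ≤ cap` s.t. some strategy is `d`-safe in `s` and visits `T`
infinitely often almost surely. -/
def safeBuchiVec [Fintype A] (T : Set S) (s : S) : ℕ∞ :=
  ⨅ d ∈ {d : ℕ | d ≤ M.cap ∧ ∃ σ : Strat S A, M.SafeStrat σ d s ∧ M.buchiAS σ s T}, (d : ℕ∞)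

/-- Iterated memory update of a memory structure. -/
def updStar {Mem : Type} (upd : Mem → S → A → S → Mem) : Mem → S → List (A × S) → Mem
  | m, _, [] => m
  | m, s, (a, t) :: rest => updStar upd (upd m s a t) t rest

/-- Finite-memory strategies: encodable by a finite memory structure. -/
def FinMemStrategy (σ : Strat S A) : Prop :=
  ∃ (Mem : Type) (_ : Finite Mem) (init : S → Mem) (upd : Mem → S → A → S → Mem)
    (nxt : Mem → S → A),
    ∀ h : S × List (A × S), σ h = nxt (updStar upd (init h.1) h.1 h.2) (lastState h.1 h.2)

/-- The joint run `α ⊙ ρ`. -/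
def jointRun (s : S) (steps : List (A × S)) (ρ : ℕ → S × A) : ℕ → S × A :=
  fun i => if h : i < steps.length then (stateAt s steps i, (steps.get ⟨i, h⟩).1)
           else ρ (i - steps.length)

end CMDP

/-!
Once a run stops visiting reload states, its energy level drops by exactly the consumption of
each step, so a `d`-safe run has bounded total consumption from then on. In a decreasing CMDP
every cycle of a run has positive consumption (a cycle that is not simple contains a shorter
cycle), and by pigeonhole every `|S|` consecutive steps close a cycle, so the consumption of a
run grows without bound.
-/

namespace CMDP

section Paths

variable {S A : Type}

theorem lastState_append_singleton (s : S) (steps : List (A × S)) (a : A) (t : S) :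
    lastState s (steps ++ [(a, t)]) = t := by
  induction steps generalizing s with
  | nil => rfl
  | cons step rest ih => exact ih step.2

theorem prefixSteps_add (ρ : ℕ → S × A) (m m' : ℕ) :
    prefixSteps ρ (m + m') = prefixSteps ρ m ++ prefixSteps (fun k => ρ (m + k)) m' := by
  simp only [prefixSteps, List.range_add, List.map_append, List.map_map]
  rfl

theorem lastState_prefixSteps (ρ : ℕ → S × A) (m : ℕ) :
    lastState (runState ρ 0) (prefixSteps ρ m) = runState ρ m := by
  induction m with
  | zero => rfl
  | succ m _ => rw [prefixSteps_add]; exact lastState_append_singleton _ _ _ _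

theorem exists_eq_runState_of_mem_prefixSteps {ρ : ℕ → S × A} {m : ℕ} {x : S}
    (hx : x ∈ runState ρ 0 :: (prefixSteps ρ m).map Prod.snd) :
    ∃ k ≤ m, runState ρ k = x := by
  simp only [prefixSteps, List.map_map, List.mem_cons, List.mem_map, List.mem_range] at hx
  rcases hx with rfl | ⟨k, hk, rfl⟩
  · exact ⟨0, m.zero_le, rfl⟩
  · exact ⟨k + 1, hk, rfl⟩

theorem cons_dropLast_map_snd_prefixSteps (ρ : ℕ → S × A) (m : ℕ) :
    runState ρ 0 :: ((prefixSteps ρ (m + 1)).map Prod.snd).dropLast =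
      (List.range (m + 1)).map (runState ρ) := by
  rw [List.range_succ_eq_map (n := m), List.map_cons, List.map_map]
  simp only [prefixSteps, List.map_map, List.range_succ, List.map_append, List.map_cons,
    List.map_nil, List.dropLast_concat]
  rfl

end Paths

variable {S A : Type} [Fintype S] (M : CMDP S A)

theorem energyFrom_append (o : Option ℕ) (s : S) (p q : List (A × S)) :
    M.energyFrom o s (p ++ q) = M.energyFrom (M.energyFrom o s p) (lastState s p) q := by
  induction p generalizing o s with
  | nil => cases o <;> rfl
  | cons step rest ih =>
    cases o with
    | none => cases q <;> rfl
    | some l => exact ih _ step.2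

theorem consAux_append (s : S) (p q : List (A × S)) :
    M.consAux s (p ++ q) = M.consAux s p + M.consAux (lastState s p) q := by
  induction p generalizing s with
  | nil => simp [consAux, lastState]
  | cons step rest ih => simp only [List.cons_append, consAux, ih, lastState, Nat.add_assoc]

theorem consAux_le_of_energyFrom_ne_none {l : ℕ} {s : S} {steps : List (A × S)}
    (hR : ∀ x ∈ s :: steps.map Prod.snd, x ∉ M.R)
    (h : M.energyFrom (some l) s steps ≠ none) :
    M.consAux s steps ≤ l := by
  induction steps generalizing l s with
  | nil => exact Nat.zero_le l
  | cons step rest ih =>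
    obtain ⟨a, t⟩ := step
    have hs : s ∉ M.R := hR s List.mem_cons_self
    by_cases hC : M.C s a ≤ l
    · have hrest : M.energyFrom (some (l - M.C s a)) t rest ≠ none := by
        simpa [energyFrom, levelStep, hs, hC] using h
      have : M.consAux t rest ≤ l - M.C s a :=
        ih (fun x hx => hR x (List.mem_cons_of_mem s hx)) hrest
      simp only [consAux]
      omega
    · simp [energyFrom, levelStep, hs, hC] at h

def prefixCost (ρ : ℕ → S × A) (m : ℕ) : ℕ := M.consAux (runState ρ 0) (prefixSteps ρ m)

theorem prefixCost_add (ρ : ℕ → S × A) (m m' : ℕ) :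
    M.prefixCost ρ (m + m') = M.prefixCost ρ m + M.prefixCost (fun k => ρ (m + k)) m' := by
  rw [prefixCost, prefixSteps_add, consAux_append, lastState_prefixSteps]
  rfl

theorem prefixCost_shift_le (ρ : ℕ → S × A) {a l m : ℕ} (h : a + l ≤ m) :
    M.prefixCost (fun k => ρ (a + k)) l ≤ M.prefixCost ρ m := by
  obtain ⟨r, rfl⟩ := Nat.exists_eq_add_of_le h
  rw [Nat.add_assoc, prefixCost_add, prefixCost_add]
  omega

variable {M}

theorem IsRun.shift {ρ : ℕ → S × A} (hrun : M.IsRun ρ) (a : ℕ) :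
    M.IsRun fun k => ρ (a + k) :=
  fun i => hrun (a + i)

theorem IsRun.validPath_prefixSteps {ρ : ℕ → S × A} (hrun : M.IsRun ρ) (m : ℕ) :
    M.ValidPath (runState ρ 0) (prefixSteps ρ m) := by
  induction m generalizing ρ with
  | zero => trivial
  | succ m ih =>
    rw [Nat.add_comm, prefixSteps_add]
    exact ⟨hrun 0, ih (hrun.shift 1)⟩

theorem Decreasing.prefixCost_pos_of_cycle (hdec : M.Decreasing) {ρ : ℕ → S × A}
    (hrun : M.IsRun ρ) {m : ℕ} (hm : 0 < m) (hcyc : runState ρ m = runState ρ 0) :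
    0 < M.prefixCost ρ m := by
  induction m using Nat.strong_induction_on generalizing ρ with
  | _ m ih =>
  by_cases hinj :
      ∀ a ∈ List.range m, ∀ b ∈ List.range m, runState ρ a = runState ρ b → a = b
  · obtain ⟨m, rfl⟩ := Nat.exists_eq_add_one_of_ne_zero hm.ne'
    refine hdec _ _ (hrun.validPath_prefixSteps _) (by simp [prefixSteps]) ?_ ?_
    · rw [lastState_prefixSteps, hcyc]
    · rw [cons_dropLast_map_snd_prefixSteps]
      exact (List.nodup_map_iff_inj_on List.nodup_range).mpr hinj
  · obtain ⟨a, b, hab, hbm, hrep⟩ :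
        ∃ a b, a < b ∧ b < m ∧ runState ρ a = runState ρ b := by
      push Not at hinj
      obtain ⟨a, ha, b, hb, hrep, hne⟩ := hinj
      rw [List.mem_range] at ha hb
      rcases hne.lt_or_gt with h | h
      exacts [⟨a, b, h, hb, hrep⟩, ⟨b, a, h, ha, hrep.symm⟩]
    calc 0 < M.prefixCost (fun k => ρ (a + k)) (b - a) :=
          ih (b - a) (by omega) (hrun.shift a) (by omega)
            (by simp only [runState, Nat.add_sub_cancel' hab.le, Nat.add_zero]; exact hrep.symm)
      _ ≤ M.prefixCost ρ m := M.prefixCost_shift_le ρ (by omega)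

theorem Decreasing.one_le_prefixCost_card (hdec : M.Decreasing) {ρ : ℕ → S × A}
    (hrun : M.IsRun ρ) : 1 ≤ M.prefixCost ρ (Fintype.card S) := by
  obtain ⟨a, ha, b, hb, hne, hrep⟩ := Finset.exists_ne_map_eq_of_card_lt_of_maps_to
    (s := Finset.range (Fintype.card S + 1)) (t := Finset.univ) (f := runState ρ)
    (by simp) (fun a _ => Finset.mem_univ _)
  rw [Finset.mem_range] at ha hb
  wlog hab : a < b generalizing a b
  · exact this b hb a ha hne.symm hrep.symm (by omega)
  calc 1 ≤ M.prefixCost (fun k => ρ (a + k)) (b - a) :=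
        hdec.prefixCost_pos_of_cycle (hrun.shift a) (by omega)
          (by simp only [runState, Nat.add_sub_cancel' hab.le, Nat.add_zero]; exact hrep.symm)
    _ ≤ M.prefixCost ρ (Fintype.card S) := M.prefixCost_shift_le ρ (by omega)

theorem Decreasing.le_prefixCost_mul_card (hdec : M.Decreasing) {ρ : ℕ → S × A}
    (hrun : M.IsRun ρ) (k : ℕ) : k ≤ M.prefixCost ρ (k * Fintype.card S) := by
  induction k with
  | zero => exact Nat.zero_le _
  | succ k ih =>
    have := hdec.one_le_prefixCost_card (hrun.shift (k * Fintype.card S))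
    rw [Nat.succ_mul, prefixCost_add]
    omega

theorem DSafe.exists_prefixCost_shift_le {d n : ℕ} {ρ : ℕ → S × A} (hsafe : M.DSafe d ρ)
    (hR : ∀ i, n ≤ i → runState ρ i ∉ M.R) :
    ∃ e, ∀ m, M.prefixCost (fun k => ρ (n + k)) m ≤ e := by
  obtain ⟨e, he⟩ := Option.ne_none_iff_exists'.mp (hsafe n)
  refine ⟨e, fun m => M.consAux_le_of_energyFrom_ne_none (fun x hx => ?_) ?_⟩
  · obtain ⟨k, -, rfl⟩ := exists_eq_runState_of_mem_prefixSteps hx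
    exact hR (n + k) (Nat.le_add_right n k)
  · have := hsafe (n + m)
    rwa [energy, prefixSteps_add, energyFrom_append, ← energy, he, lastState_prefixSteps] at this

end CMDP

open CMDP in
/-- In a decreasing CMDP, every `d`-safe run visits the reload states infinitely
many times. -/
theorem dsafe_run_visits_reload_infinitely {S A : Type} [Fintype S] (M : CMDP S A)
    (hdec : M.Decreasing) (d : ℕ) (ρ : ℕ → S × A)
    (hrun : M.IsRun ρ) (hsafe : M.DSafe d ρ) :
    ∀ n : ℕ, ∃ i : ℕ, n ≤ i ∧ runState ρ i ∈ M.R := by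
  intro n
  by_contra! hR
  obtain ⟨e, he⟩ := hsafe.exists_prefixCost_shift_le hR
  have hgrow := hdec.le_prefixCost_mul_card (hrun.shift n) (e + 1)
  have := he ((e + 1) * Fintype.card S)
  omega
end
end

section
/- Define the operator B_M on vectors r ∈ (ℕ ∪ {∞})^S by B_M(r) = ⌈A_M(r)⌉, where A_M(r)(s) = Safe_M(s) for s ∈ T and A_M(r)(s) = min_a SPR(s, a, r) otherwise, with SPR(s,a,x) = C(s,a) + min over t ∈ Succ(s,a) of max{x(t), Safe_M(t') : t' ∈ Succ(s,a), t' ≠ t}, and the two-sided truncation ⌈x⌉(s) = ∞ if x(s) > cap, 0 if x(s) ≤ cap and s ∈ R, and x(s) otherwise. Let y_T(s) = Safe_M(s) for s ∈ T and ∞ otherwise. Then for every i ≥ 0 and every state s, B_M^i(y_T)(s) equals the minimal ℓ such that some strategy is ℓ-safe in s and produces at least one run visiting T within the first i steps (∞ if no such ℓ ≤ cap exists). -/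
open scoped Classical NNReal ENat

noncomputable section

/-!
Both sides are compared through the sets `{n : ℕ | · ≤ n}`, and both unfold by one step in the
same way. An `ℓ`-safe strategy from `s ∉ T` with a run reaching `T` within `i + 1` steps first
plays some `a`, leaving level `m` with `C(s, a) + m = ℓ` (`cap` in place of `ℓ` at a reload
state); its residual strategy is `m`-safe from every successor, and from one successor `t` it
reaches `T` within `i` steps. Conversely, such a strategy from `t` and `m`-safe strategies from the
other successors glue into one strategy playing `a` first. Since safety is monotone in the initial
level, an `m`-safe strategy from `u` exists iff `Safe(u) ≤ m`, so this is exactly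
`SPR(s, a, x) ≤ ℓ` for the `i`-step values `x`; the truncation `⌈·⌉` accounts for the level being
irrelevant at reload states and for levels above `cap` being unavailable.
-/

namespace ENat

lemma eq_of_forall_le_natCast_iff {x y : ℕ∞} (h : ∀ n : ℕ, x ≤ n ↔ y ≤ n) : x = y :=
  WithTop.eq_of_forall_le_coe_iff h

lemma iInf_le_natCast_iff {ι : Sort*} {f : ι → ℕ∞} {n : ℕ} : ⨅ i, f i ≤ n ↔ ∃ i, f i ≤ n := by
  simp only [← lt_add_one_iff (natCast_ne_top n), iInf_lt_iff]

lemma biInf_le_natCast_iff {ι : Type*} {s : Set ι} {f : ι → ℕ∞} {n : ℕ} :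
    ⨅ i ∈ s, f i ≤ n ↔ ∃ i ∈ s, f i ≤ n := by
  simp only [iInf_le_natCast_iff, exists_prop]

lemma natCast_add_le_natCast_iff {c b : ℕ} {y : ℕ∞} :
    c + y ≤ b ↔ ∃ m : ℕ, c + m = b ∧ y ≤ m := by
  induction y using ENat.recTopCoe with
  | top => simp
  | coe y =>
    norm_cast
    exact ⟨fun h => ⟨b - c, by omega, by omega⟩, fun ⟨m, hm, hy⟩ => by omega⟩

lemma biInf_le_natCast_iff_of_monotone {P : ℕ → Prop} (hP : Monotone P) {c n : ℕ} :
    ⨅ ℓ ∈ {ℓ | ℓ ≤ c ∧ P ℓ}, (ℓ : ℕ∞) ≤ n ↔ P (min n c) := by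
  rw [biInf_le_natCast_iff]
  constructor
  · rintro ⟨ℓ, ⟨hℓc, hℓ⟩, hℓn⟩
    exact hP (le_min (by exact_mod_cast hℓn) hℓc) hℓ
  · exact fun h => ⟨_, ⟨min_le_right n c, h⟩, by exact_mod_cast min_le_left n c⟩

end ENat

namespace CMDP

variable {S A : Type}

def consRun (p : S × A) (ρ : ℕ → S × A) : ℕ → S × A
  | 0 => p
  | k + 1 => ρ k

lemma exists_eq_consRun (ρ : ℕ → S × A) : ∃ p ρ', ρ = consRun p ρ' :=
  ⟨ρ 0, fun k => ρ (k + 1), funext fun k => by cases k <;> rfl⟩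

lemma prefixSteps_consRun (p : S × A) (ρ : ℕ → S × A) (i : ℕ) :
    prefixSteps (consRun p ρ) (i + 1) = (p.2, (ρ 0).1) :: prefixSteps ρ i := by
  simp only [prefixSteps, List.range_succ_eq_map, List.map_cons, List.map_map]
  rfl

lemma visitsWithin_consRun_succ_iff {T : Set S} {i : ℕ} {s : S} {a : A} {ρ : ℕ → S × A} :
    VisitsWithin T (i + 1) (consRun (s, a) ρ) ↔ s ∈ T ∨ VisitsWithin T i ρ := by
  constructor
  · rintro ⟨_ | j, hj, hjT⟩
    exacts [Or.inl hjT, Or.inr ⟨j, by omega, hjT⟩]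
  · rintro (hs | ⟨j, hj, hjT⟩)
    exacts [⟨0, by omega, hs⟩, ⟨j + 1, by omega, hjT⟩]

def shiftStrat (σ : Strat S A) (s : S) (a : A) : Strat S A :=
  fun h => σ (s, (a, h.1) :: h.2)

def consStrat (a : A) (τ : Strat S A) : Strat S A
  | (_, []) => a
  | (_, (_, t) :: rest) => τ (t, rest)

variable [Fintype S] {M : CMDP S A}

lemma compatFrom_consRun_iff {σ : Strat S A} {s : S} {a : A} {ρ : ℕ → S × A} :
    M.CompatFrom σ s (consRun (s, a) ρ) ↔
      a = σ (s, []) ∧ ∃ t ∈ M.Succ s a, M.CompatFrom (shiftStrat σ s a) t ρ := by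
  constructor
  · rintro ⟨⟨hrun, hact⟩, -⟩
    refine ⟨hact 0, _, hrun 0, ⟨fun i => hrun (i + 1), fun i => ?_⟩, rfl⟩
    have h := hact (i + 1)
    rwa [prefixSteps_consRun] at h
  · rintro ⟨ha, t, ht, ⟨hrun, hact⟩, rfl⟩
    refine ⟨⟨?_, ?_⟩, rfl⟩
    · rintro (_ | i)
      exacts [ht, hrun i]
    · rintro (_ | i)
      · exact ha
      · rw [prefixSteps_consRun]
        exact hact i

lemma compatFrom_congr {σ σ' : Strat S A} {s : S} {ρ : ℕ → S × A}
    (h : ∀ steps, σ (s, steps) = σ' (s, steps)) :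
    M.CompatFrom σ s ρ ↔ M.CompatFrom σ' s ρ := by
  constructor <;> rintro ⟨⟨hrun, hact⟩, h0⟩ <;> refine ⟨⟨hrun, fun i => ?_⟩, h0⟩ <;>
    rw [hact i, h0]
  exacts [h _, (h _).symm]

lemma safeStrat_congr {σ σ' : Strat S A} {ℓ : ℕ} {s : S}
    (h : ∀ steps, σ (s, steps) = σ' (s, steps)) :
    M.SafeStrat σ ℓ s ↔ M.SafeStrat σ' ℓ s :=
  forall_congr' fun _ => imp_congr_left (compatFrom_congr h)

lemma succ_nonempty (s : S) (a : A) : (M.Succ s a).Nonempty := by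
  by_contra h
  have hzero : ∀ t, M.Δ s a t = 0 := fun t =>
    le_antisymm (not_lt.1 fun ht => h ⟨t, ht⟩) zero_le
  simpa [hzero] using M.Δ_sum s a

variable (M) in
def canonicalRun : Strat S A → S → ℕ → S × A
  | σ, s, 0 => (s, σ (s, []))
  | σ, s, n + 1 =>
      canonicalRun (shiftStrat σ s (σ (s, []))) (M.succ_nonempty s (σ (s, []))).some n

lemma canonicalRun_compatFrom (σ : Strat S A) (s : S) :
    M.CompatFrom σ s (M.canonicalRun σ s) := by
  suffices h : ∀ i (σ : Strat S A) (s : S),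
      (M.canonicalRun σ s (i + 1)).1 ∈ M.Succ (M.canonicalRun σ s i).1 (M.canonicalRun σ s i).2 ∧
        (M.canonicalRun σ s i).2 = σ (s, prefixSteps (M.canonicalRun σ s) i) from
    ⟨⟨fun i => (h i σ s).1, fun i => (h i σ s).2⟩, rfl⟩
  intro i
  induction i with
  | zero => exact fun σ s => ⟨Set.Nonempty.some_mem _, rfl⟩
  | succ i ih =>
    intro σ s
    have hunfold : M.canonicalRun σ s = consRun (s, σ (s, []))
        (M.canonicalRun (shiftStrat σ s (σ (s, []))) (M.succ_nonempty s (σ (s, []))).some) :=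
      funext fun k => by cases k <;> rfl
    rw [hunfold, prefixSteps_consRun]
    exact ih _ _

lemma exists_compatFrom (σ : Strat S A) (s : S) : ∃ ρ, M.CompatFrom σ s ρ :=
  ⟨_, canonicalRun_compatFrom σ s⟩

lemma CompatFrom.eq_consRun {σ : Strat S A} {s : S} {ρ : ℕ → S × A} (h : M.CompatFrom σ s ρ) :
    ∃ ρ', ρ = consRun (s, σ (s, [])) ρ' ∧
      ∃ t ∈ M.Succ s (σ (s, [])), M.CompatFrom (shiftStrat σ s (σ (s, []))) t ρ' := by
  obtain ⟨⟨s', a⟩, ρ', rfl⟩ := exists_eq_consRun ρ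
  obtain rfl : s' = s := h.2
  obtain ⟨rfl, ht⟩ := compatFrom_consRun_iff.1 h
  exact ⟨ρ', rfl, ht⟩

variable (M) in
def reloadedLevel (s : S) (ℓ : ℕ) : ℕ := if s ∈ M.R then M.cap else ℓ

lemma reloadedLevel_mono {s : S} {ℓ ℓ' : ℕ} (h : ℓ ≤ ℓ') :
    M.reloadedLevel s ℓ ≤ M.reloadedLevel s ℓ' := by
  unfold reloadedLevel
  split_ifs <;> omega

lemma reloadedLevel_le_cap {s : S} {ℓ : ℕ} (h : ℓ ≤ M.cap) : M.reloadedLevel s ℓ ≤ M.cap := by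
  unfold reloadedLevel
  split_ifs <;> omega

lemma levelStep_eq_some_iff {s : S} {a : A} {ℓ m : ℕ} :
    M.levelStep s a ℓ = some m ↔ M.C s a + m = M.reloadedLevel s ℓ := by
  unfold levelStep reloadedLevel
  split_ifs <;> simp <;> omega

lemma levelStep_mono {s : S} {a : A} {ℓ ℓ' m : ℕ} (h : ℓ ≤ ℓ')
    (hm : M.levelStep s a ℓ = some m) : ∃ m' ≥ m, M.levelStep s a ℓ' = some m' := by
  have hle := reloadedLevel_mono (M := M) (s := s) h
  rw [levelStep_eq_some_iff] at hm
  exact ⟨M.reloadedLevel s ℓ' - M.C s a, by omega, levelStep_eq_some_iff.2 (by omega)⟩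

lemma energyFrom_none (s : S) (steps : List (A × S)) : M.energyFrom none s steps = none := by
  cases steps <;> rfl

lemma energy_ne_none_of_le {ℓ ℓ' : ℕ} (h : ℓ ≤ ℓ') {s : S} {steps : List (A × S)}
    (he : M.energy ℓ s steps ≠ none) : M.energy ℓ' s steps ≠ none := by
  induction steps generalizing s ℓ ℓ' with
  | nil => exact Option.some_ne_none _
  | cons p rest ih =>
    obtain ⟨a, t⟩ := p
    cases hl : M.levelStep s a ℓ with
    | none => exact absurd (by rw [energy, energyFrom, hl, energyFrom_none]) he
    | some m =>
      obtain ⟨m', hm', hl'⟩ := levelStep_mono h hl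
      rw [energy, energyFrom, hl] at he
      rw [energy, energyFrom, hl']
      exact ih hm' he

lemma DSafe.mono {ℓ ℓ' : ℕ} (h : ℓ ≤ ℓ') {ρ : ℕ → S × A} (hρ : M.DSafe ℓ ρ) : M.DSafe ℓ' ρ :=
  fun i => energy_ne_none_of_le h (hρ i)

lemma SafeStrat.mono {σ : Strat S A} {ℓ ℓ' : ℕ} (h : ℓ ≤ ℓ') {s : S}
    (hσ : M.SafeStrat σ ℓ s) : M.SafeStrat σ ℓ' s :=
  fun ρ hρ => (hσ ρ hρ).mono h

lemma dSafe_consRun_iff {ℓ : ℕ} {s : S} {a : A} {ρ : ℕ → S × A} :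
    M.DSafe ℓ (consRun (s, a) ρ) ↔ ∃ m, M.levelStep s a ℓ = some m ∧ M.DSafe m ρ := by
  have step : ∀ i, M.energy ℓ s (prefixSteps (consRun (s, a) ρ) (i + 1)) =
      M.energyFrom (M.levelStep s a ℓ) (ρ 0).1 (prefixSteps ρ i) := fun i => by
    rw [prefixSteps_consRun]; rfl
  constructor
  · intro h
    cases hl : M.levelStep s a ℓ with
    | none => exact absurd ((step 0).trans (by rw [hl, energyFrom_none])) (h 1)
    | some m =>
      refine ⟨m, rfl, fun i => ?_⟩
      have hi := h (i + 1)
      rwa [runState, consRun, step, hl] at hi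
  · rintro ⟨m, hm, h⟩ (_ | i)
    · exact Option.some_ne_none _
    · rw [runState, consRun, step, hm]
      exact h i

lemma safeStrat_iff {σ : Strat S A} {ℓ : ℕ} {s : S} :
    M.SafeStrat σ ℓ s ↔ ∃ m, M.levelStep s (σ (s, [])) ℓ = some m ∧
      ∀ t ∈ M.Succ s (σ (s, [])), M.SafeStrat (shiftStrat σ s (σ (s, []))) m t := by
  constructor
  · intro hσ
    obtain ⟨ρ, hρ⟩ := exists_compatFrom σ s
    obtain ⟨ρ', rfl, -⟩ := hρ.eq_consRun
    obtain ⟨m, hm, -⟩ := dSafe_consRun_iff.1 (hσ _ hρ)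
    refine ⟨m, hm, fun t ht ρ'' hρ'' => ?_⟩
    obtain ⟨m', hm', hsafe⟩ :=
      dSafe_consRun_iff.1 (hσ _ (compatFrom_consRun_iff.2 ⟨rfl, t, ht, hρ''⟩))
    obtain rfl := Option.some.inj (hm.symm.trans hm')
    exact hsafe
  · rintro ⟨m, hm, hshift⟩ ρ hρ
    obtain ⟨ρ', rfl, t, ht, hρ'⟩ := hρ.eq_consRun
    exact dSafe_consRun_iff.2 ⟨m, hm, hshift t ht ρ' hρ'⟩

lemma SafeStrat.of_mem_R {σ : Strat S A} {ℓ ℓ' : ℕ} {s : S} (hs : s ∈ M.R)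
    (hσ : M.SafeStrat σ ℓ s) : M.SafeStrat σ ℓ' s := by
  have hlevel : ∀ a, M.levelStep s a ℓ' = M.levelStep s a ℓ := by simp [levelStep, hs]
  rw [safeStrat_iff] at hσ ⊢
  simpa only [hlevel] using hσ

lemma exists_safeStrat_reloadedLevel_iff {ℓ : ℕ} {s : S} :
    (∃ σ, M.SafeStrat σ (M.reloadedLevel s ℓ) s) ↔ ∃ σ, M.SafeStrat σ ℓ s := by
  unfold reloadedLevel
  split_ifs with hs
  · exact exists_congr fun σ => ⟨SafeStrat.of_mem_R hs, SafeStrat.of_mem_R hs⟩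
  · rfl

lemma safeVec_le_natCast_iff {s : S} {n : ℕ} :
    M.safeVec s ≤ n ↔ ∃ σ, M.SafeStrat σ (min n M.cap) s :=
  ENat.biInf_le_natCast_iff_of_monotone fun _ _ h ⟨σ, hσ⟩ => ⟨σ, hσ.mono h⟩

variable (M) in
def SafeReachWithin (T : Set S) (i ℓ : ℕ) (s : S) : Prop :=
  ∃ σ : Strat S A, M.SafeStrat σ ℓ s ∧ ∃ ρ, M.CompatFrom σ s ρ ∧ VisitsWithin T i ρ

lemma safeReachWithin_monotone {T : Set S} {i : ℕ} {s : S} :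
    Monotone fun ℓ => M.SafeReachWithin T i ℓ s :=
  fun _ _ h ⟨σ, hσ, hρ⟩ => ⟨σ, hσ.mono h, hρ⟩

lemma safePRBdd_le_natCast_iff {T : Set S} {i : ℕ} {s : S} {n : ℕ} :
    M.safePRBdd T i s ≤ n ↔ M.SafeReachWithin T i (min n M.cap) s :=
  ENat.biInf_le_natCast_iff_of_monotone safeReachWithin_monotone

lemma safeReachWithin_iff_of_mem {T : Set S} {i ℓ : ℕ} {s : S} (hs : s ∈ T) :
    M.SafeReachWithin T i ℓ s ↔ ∃ σ, M.SafeStrat σ ℓ s :=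
  ⟨fun ⟨σ, hσ, _⟩ => ⟨σ, hσ⟩, fun ⟨σ, hσ⟩ =>
    let ⟨ρ, hρ⟩ := exists_compatFrom σ s
    ⟨σ, hσ, ρ, hρ, 0, Nat.zero_le i, hρ.2 ▸ hs⟩⟩

lemma safeReachWithin_zero_iff {T : Set S} {ℓ : ℕ} {s : S} :
    M.SafeReachWithin T 0 ℓ s ↔ s ∈ T ∧ ∃ σ, M.SafeStrat σ ℓ s := by
  refine ⟨fun h => ?_, fun ⟨hs, hσ⟩ => (safeReachWithin_iff_of_mem hs).2 hσ⟩
  obtain ⟨σ, hσ, ρ, hρ, j, hj, hjT⟩ := h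
  obtain rfl : j = 0 := Nat.le_zero.1 hj
  exact ⟨hρ.2 ▸ hjT, σ, hσ⟩

lemma exists_strat_extending {σ : Strat S A} {t : S} {U : Set S} {m : ℕ}
    (h : ∀ u ∈ U, u ≠ t → ∃ σ, M.SafeStrat σ m u) :
    ∃ τ : Strat S A, (∀ steps, τ (t, steps) = σ (t, steps)) ∧
      ∀ u ∈ U, u ≠ t → M.SafeStrat τ m u := by
  have hfam : ∀ u, ∃ σ' : Strat S A, u ∈ U → u ≠ t → M.SafeStrat σ' m u := fun u => by
    by_cases hu : u ∈ U ∧ u ≠ t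
    · obtain ⟨σ', hσ'⟩ := h u hu.1 hu.2
      exact ⟨σ', fun _ _ => hσ'⟩
    · exact ⟨σ, fun h₁ h₂ => absurd ⟨h₁, h₂⟩ hu⟩
  choose fam hfam using hfam
  refine ⟨fun hist => if hist.1 = t then σ hist else fam hist.1 hist, fun _ => if_pos rfl,
    fun u hu hne => (safeStrat_congr fun _ => if_neg hne).2 (hfam u hu hne)⟩

lemma safeReachWithin_succ_iff_of_not_mem {T : Set S} {i ℓ : ℕ} {s : S} (hs : s ∉ T) :
    M.SafeReachWithin T (i + 1) ℓ s ↔ ∃ a m, M.levelStep s a ℓ = some m ∧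
      ∃ t ∈ M.Succ s a, M.SafeReachWithin T i m t ∧
        ∀ u ∈ M.Succ s a, u ≠ t → ∃ σ, M.SafeStrat σ m u := by
  constructor
  · rintro ⟨σ, hσ, ρ, hρ, hvis⟩
    obtain ⟨m, hm, hshift⟩ := safeStrat_iff.1 hσ
    obtain ⟨ρ', rfl, t, ht, hρ'⟩ := hρ.eq_consRun
    refine ⟨σ (s, []), m, hm, t, ht, ⟨_, hshift t ht, ρ', hρ', ?_⟩,
      fun u hu _ => ⟨_, hshift u hu⟩⟩
    exact (visitsWithin_consRun_succ_iff.1 hvis).resolve_left hs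
  · rintro ⟨a, m, hm, t, ht, ⟨σ, hσ, ρ, hρ, hvis⟩, hothers⟩
    obtain ⟨τ, hτσ, hτ⟩ := exists_strat_extending (σ := σ) hothers
    have hτt : M.SafeStrat τ m t := (safeStrat_congr hτσ).2 hσ
    refine ⟨consStrat a τ, safeStrat_iff.2 ⟨m, hm, fun u hu => ?_⟩, consRun (s, a) ρ,
      compatFrom_consRun_iff.2 ⟨rfl, t, ht, (compatFrom_congr hτσ).2 hρ⟩,
      visitsWithin_consRun_succ_iff.2 (Or.inr hvis)⟩
    by_cases hut : u = t
    · exact hut ▸ hτt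
    · exact hτ u hu hut

lemma trunc2_le_natCast_iff {y : S → ℕ∞} {s : S} {n : ℕ} :
    M.trunc2 y s ≤ n ↔ y s ≤ M.reloadedLevel s (min n M.cap) := by
  have hcapn := reloadedLevel_le_cap (M := M) (s := s) (min_le_right n M.cap)
  unfold trunc2
  split_ifs with hcap hR
  · simp only [top_le_iff, ENat.natCast_ne_top, false_iff, not_le]
    exact lt_of_le_of_lt (by exact_mod_cast hcapn) hcap
  · simpa [reloadedLevel, hR] using not_lt.1 hcap
  · rw [reloadedLevel, if_neg hR]
    rcases min_cases n M.cap with ⟨hmin, -⟩ | ⟨hmin, hlt⟩ <;> rw [hmin]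
    exact iff_of_true ((not_lt.1 hcap).trans (by exact_mod_cast hlt.le)) (not_lt.1 hcap)

lemma spr_le_natCast_iff {s : S} {a : A} {x : S → ℕ∞} {b : ℕ} :
    M.spr s a x ≤ b ↔ ∃ m : ℕ, M.C s a + m = b ∧
      ∃ t ∈ M.Succ s a, x t ≤ m ∧ ∀ u ∈ M.Succ s a, u ≠ t → M.safeVec u ≤ m := by
  simp only [spr, ENat.natCast_add_le_natCast_iff, ENat.biInf_le_natCast_iff, max_le_iff,
    iSup₂_le_iff, Set.mem_ofPred_eq, and_imp]

lemma yTvec_eq_safePRBdd_zero (T : Set S) : M.yTvec T = M.safePRBdd T 0 := by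
  funext s
  refine ENat.eq_of_forall_le_natCast_iff fun n => ?_
  rw [safePRBdd_le_natCast_iff, safeReachWithin_zero_iff, yTvec]
  by_cases hs : s ∈ T
  · rw [if_pos hs, safeVec_le_natCast_iff, and_iff_right hs]
  · simp [hs]

lemma opB_safePRBdd (T : Set S) (i : ℕ) : M.opB T (M.safePRBdd T i) = M.safePRBdd T (i + 1) := by
  funext s
  refine ENat.eq_of_forall_le_natCast_iff fun n => ?_
  rw [opB, trunc2_le_natCast_iff, safePRBdd_le_natCast_iff, opA]
  by_cases hs : s ∈ T
  · rw [if_pos hs, safeVec_le_natCast_iff, min_eq_left (reloadedLevel_le_cap (min_le_right n M.cap)), exists_safeStrat_reloadedLevel_iff,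
      safeReachWithin_iff_of_mem hs]
  · rw [if_neg hs, ENat.iInf_le_natCast_iff, safeReachWithin_succ_iff_of_not_mem hs]
    refine exists_congr fun a => ?_
    simp only [spr_le_natCast_iff, levelStep_eq_some_iff]
    refine exists_congr fun m => and_congr_right fun hm => ?_
    have hmin : min m M.cap = m :=
      min_eq_left (by have := reloadedLevel_le_cap (M := M) (s := s) (min_le_right n M.cap); omega)
    simp only [safePRBdd_le_natCast_iff, safeVec_le_natCast_iff, hmin]

end CMDP

open CMDP in
/-- The `i`-th iterate of the operator `B` on `y_T` equals the vector of minimal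
levels for safe positive reachability of `T` within `i` steps. -/
theorem opB_iterate_eq_safePRBdd {S A : Type} [Fintype S] (M : CMDP S A)
    (T : Set S) :
    ∀ (i : ℕ) (s : S), (M.opB T)^[i] (M.yTvec T) s = M.safePRBdd T i s := by
  intro i
  refine congrFun ?_
  induction i with
  | zero => exact M.yTvec_eq_safePRBdd_zero T
  | succ i ih => rw [Function.iterate_succ_apply', ih, opB_safePRBdd]
end
end
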